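/- arXiv:1506.07485 — 3 statements merged into one kernel-verified Lean document; each statement's English description precedes it below -/
import Mathlib

section
/- For any complex number z not on the branch cut, the integral of log Γ satisfies ∫ log Γ(x) dx = z(1-z)/2 + (z/2)·log(2π) + z·log Γ(z) − log G(1+z) + C, i.e. the function z ↦ z(1-z)/2 + (z/2)·log(2π) + z·log Γ(z) − log G(1+z) has derivative log Γ(z), where G is the Barnes G-function. -/
/-
Off the real axis, `log Γ` and `log G(1 + ·)` are given by their Weierstrass series, which can be
differentiated termwise; comparing the two series gives
`(log G(1 + z))' = log(2π)/2 + 1/2 - z + z ψ(z)` with `ψ = Γ'/Γ`. Every branch of a logarithm of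
`f` has derivative `f'/f`, so the same relation holds between the derivatives of `logG1p` and `logΓ`
at the non-real points of `s`, and, these derivatives being continuous, at every point of `s`.
The product rule then finishes the proof.
-/

open Complex

/-- `logBarnesG1p z` is `log G(1+z)` for the Barnes G-function, via its Weierstrass product. -/
noncomputable def logBarnesG1p (z : ℂ) : ℂ :=
  z / 2 * Real.log (2 * Real.pi) - (z + z ^ 2 * (1 + Real.eulerMascheroniConstant)) / 2 +
    ∑' n : ℕ, (((n : ℂ) + 1) * Complex.log (1 + z / ((n : ℂ) + 1)) + z ^ 2 / (2 * ((n : ℂ) + 1)) - z)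

/-- The Barnes G-function (away from its zeros). -/
noncomputable def BarnesG (z : ℂ) : ℂ := Complex.exp (logBarnesG1p (z - 1))

open Filter Finset Topology
open scoped Nat Real

local notation "γ" => Real.eulerMascheroniConstant

lemma isOpen_setOf_im_ne_zero : IsOpen {w : ℂ | w.im ≠ 0} :=
  isOpen_ne.preimage continuous_im

lemma eqOn_of_eqOn_inter_im_ne_zero {E : Type*} [TopologicalSpace E] [T2Space E]
    {f g : ℂ → E} {s : Set ℂ} (hs : IsOpen s) (hf : ContinuousOn f s) (hg : ContinuousOn g s)
    (h : Set.EqOn f g (s ∩ {w | w.im ≠ 0})) : Set.EqOn f g s :=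
  h.of_subset_closure hf hg Set.inter_subset_left
    (((dense_compl_singleton (0 : ℝ)).preimage isOpenMap_im).open_subset_closure_inter hs)

lemma deriv_eqOn_logDeriv_of_exp_eqOn {L f : ℂ → ℂ} {s : Set ℂ} (hs : IsOpen s)
    (hL : DifferentiableOn ℂ L s) (hLf : ∀ w ∈ s, exp (L w) = f w) :
    Set.EqOn (deriv L) (logDeriv f) s := by
  intro w hw
  have hfL : (fun v => exp (L v)) =ᶠ[𝓝 w] f := eventually_of_mem (hs.mem_nhds hw) hLf
  rw [← (logDeriv_congr_nhds hfL).eq_of_nhds, logDeriv_apply,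
    ((hL.differentiableAt (hs.mem_nhds hw)).hasDerivAt.cexp).deriv,
    mul_div_cancel_left₀ _ (exp_ne_zero _)]

lemma norm_natCast_add_one (n : ℕ) : ‖(n : ℂ) + 1‖ = n + 1 := by
  exact_mod_cast Complex.norm_natCast (n + 1)

lemma norm_log_one_add_sub_logTaylor_le_two_mul {u : ℂ} (hu : ‖u‖ ≤ 1 / 2) (k : ℕ) :
    ‖log (1 + u) - logTaylor (k + 1) u‖ ≤ 2 * ‖u‖ ^ (k + 1) := by
  have hinv : (1 - ‖u‖)⁻¹ ≤ 2 := by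
    rw [inv_le_comm₀ (by linarith) two_pos]
    linarith
  calc ‖log (1 + u) - logTaylor (k + 1) u‖
      ≤ ‖u‖ ^ (k + 1) * (1 - ‖u‖)⁻¹ / (k + 1) :=
        norm_log_sub_logTaylor_le k (hu.trans_lt (by norm_num))
    _ ≤ ‖u‖ ^ (k + 1) * 2 / 1 := by gcongr; linarith
    _ = 2 * ‖u‖ ^ (k + 1) := by ring

lemma summable_one_div_nat_add_one_sq : Summable fun n : ℕ => 1 / ((n : ℝ) + 1) ^ 2 := by
  exact_mod_cast (summable_nat_add_iff 1).mpr (Real.summable_one_div_nat_pow.mpr one_lt_two)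

lemma summable_mul_log_one_add_div_sub_logTaylor (z : ℂ) (k : ℕ) :
    Summable fun n : ℕ => ((n : ℂ) + 1) ^ k *
      (log (1 + z / ((n : ℂ) + 1)) - logTaylor (k + 2) (z / ((n : ℂ) + 1))) := by
  refine Summable.of_norm_bounded_eventually
    (summable_one_div_nat_add_one_sq.mul_left (2 * ‖z‖ ^ (k + 2))) ?_
  rw [Nat.cofinite_eq_atTop]
  filter_upwards [eventually_ge_atTop ⌈2 * ‖z‖⌉₊] with n hn
  have hN : (0 : ℝ) < n + 1 := by positivity
  have hnorm : ‖z / ((n : ℂ) + 1)‖ = ‖z‖ / (n + 1) := by rw [norm_div, norm_natCast_add_one]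
  have hsmall : ‖z / ((n : ℂ) + 1)‖ ≤ 1 / 2 := by
    rw [hnorm, div_le_iff₀ hN]
    linarith [Nat.ceil_le.mp hn]
  rw [norm_mul, norm_pow, norm_natCast_add_one]
  calc ((n : ℝ) + 1) ^ k * ‖log (1 + z / ((n : ℂ) + 1)) - logTaylor (k + 2) (z / ((n : ℂ) + 1))‖
      ≤ ((n : ℝ) + 1) ^ k * (2 * (‖z‖ / (n + 1)) ^ (k + 2)) := by
        gcongr
        rw [← hnorm]
        exact norm_log_one_add_sub_logTaylor_le_two_mul hsmall (k + 1)
    _ = 2 * ‖z‖ ^ (k + 2) * (1 / ((n : ℝ) + 1) ^ 2) := by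
        rw [div_pow, pow_add ((n : ℝ) + 1)]
        field_simp

lemma norm_inv_mul_add_le (n : ℕ) {v : ℂ} {r R : ℝ} (hr : 0 < r) (hvR : ‖v‖ ≤ R)
    (hv : r ≤ |v.im|) :
    ‖(((n : ℂ) + 1) * ((n : ℂ) + 1 + v))⁻¹‖ ≤ (1 + R / r) / ((n : ℝ) + 1) ^ 2 := by
  set a := ‖(n : ℂ) + 1 + v‖
  have hra : r ≤ a := hv.trans (by simpa using abs_im_le_norm ((n : ℂ) + 1 + v))
  have htri : (n : ℝ) + 1 ≤ a + ‖v‖ := by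
    rw [← norm_natCast_add_one]
    simpa using norm_sub_le ((n : ℂ) + 1 + v) v
  have hRa : R ≤ R / r * a := by
    rw [div_mul_eq_mul_div, le_div_iff₀ hr]
    exact mul_le_mul_of_nonneg_left hra ((norm_nonneg v).trans hvR)
  have hN : (0 : ℝ) < n + 1 := by positivity
  rw [norm_inv, norm_mul, norm_natCast_add_one, inv_eq_one_div,
    div_le_div_iff₀ (mul_pos hN (hr.trans_le hra)) (by positivity)]
  nlinarith

lemma half_abs_im_le_abs_im_of_mem_ball {z v : ℂ} (hv : v ∈ Metric.ball z (|z.im| / 2)) :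
    |z.im| / 2 ≤ |v.im| := by
  have hvz : ‖v - z‖ < |z.im| / 2 := mem_ball_iff_norm.mp hv
  have h := (abs_sub_abs_le_abs_sub z.im v.im).trans
    ((abs_sub_comm z.im v.im).trans_le (by simpa using abs_im_le_norm (v - z)))
  linarith

-- On the ball of radius `|Im z| / 2` around `z` the denominators are `≫ (n + 1)²` uniformly,
-- which is the summable bound on the derivatives needed for termwise differentiation.
lemma hasDerivAt_tsum_of_hasDerivAt_div_mul {F : ℕ → ℂ → ℂ} {a : ℂ → ℂ} (ha : Continuous a)
    {z : ℂ} (hz : z.im ≠ 0)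
    (hF : ∀ n v, v.im ≠ 0 → HasDerivAt (F n) (a v / (((n : ℂ) + 1) * ((n : ℂ) + 1 + v))) v)
    (hsum : Summable fun n => F n z) :
    HasDerivAt (fun w => ∑' n, F n w) (∑' n : ℕ, a z / (((n : ℂ) + 1) * ((n : ℂ) + 1 + z))) z := by
  set r := |z.im| / 2
  have hr : 0 < r := by positivity
  obtain ⟨M, hM⟩ := (isCompact_closedBall z r).exists_bound_of_continuousOn ha.continuousOn
  have hM0 : 0 ≤ M := (norm_nonneg _).trans (hM z (Metric.mem_closedBall_self hr.le))
  have him : ∀ v ∈ Metric.ball z r, r ≤ |v.im| := fun v hv => half_abs_im_le_abs_im_of_mem_ball hv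
  have hnorm : ∀ v ∈ Metric.ball z r, ‖v‖ ≤ ‖z‖ + r := fun v hv => by
    linarith [norm_le_norm_add_norm_sub' v z, mem_ball_iff_norm.mp hv]
  refine hasDerivAt_tsum_of_isPreconnected
    (summable_one_div_nat_add_one_sq.mul_left (M * (1 + (‖z‖ + r) / r)))
    Metric.isOpen_ball (convex_ball z r).isPreconnected
    (fun n v hv => hF n v (abs_pos.mp (hr.trans_le (him v hv))))
    (fun n v hv => ?_) (Metric.mem_ball_self hr) hsum (Metric.mem_ball_self hr)
  rw [div_eq_mul_inv, norm_mul, mul_assoc, ← mul_div_assoc, mul_one]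
  exact mul_le_mul (hM v (Metric.ball_subset_closedBall hv))
    (norm_inv_mul_add_le n hr (hnorm v hv) (him v hv)) (norm_nonneg _) hM0

lemma natCast_add_one_add_ne_zero (n : ℕ) {v : ℂ} (hv : v.im ≠ 0) : (n : ℂ) + 1 + v ≠ 0 :=
  fun h => hv (by simpa using congrArg im h)

lemma hasDerivAt_log_one_add_div (n : ℕ) {v : ℂ} (hv : v.im ≠ 0) :
    HasDerivAt (fun w => log (1 + w / ((n : ℂ) + 1))) ((n : ℂ) + 1 + v)⁻¹ v := by
  have hN : (n : ℂ) + 1 ≠ 0 := by exact_mod_cast n.succ_ne_zero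
  have hslit : 1 + v / ((n : ℂ) + 1) ∈ slitPlane := by
    refine mem_slitPlane_iff.mpr (Or.inr ?_)
    have h := div_natCast_im v (n + 1)
    push_cast at h
    rw [add_im, one_im, zero_add, h]
    exact div_ne_zero hv (by positivity)
  refine (((hasDerivAt_id v).div_const _).const_add 1).clog hslit |>.congr_deriv ?_
  have := natCast_add_one_add_ne_zero n hv
  simp only [id]
  field_simp

-- From the Weierstrass product `1 / Γ(z) = z e^{γz} ∏ₙ (1 + z/n) e^{-z/n}`.
noncomputable def logGammaWeierstrass (z : ℂ) : ℂ :=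
  -γ * z - log z + ∑' n : ℕ, (z / ((n : ℂ) + 1) - log (1 + z / ((n : ℂ) + 1)))

lemma summable_logGammaWeierstrass (z : ℂ) :
    Summable fun n : ℕ => z / ((n : ℂ) + 1) - log (1 + z / ((n : ℂ) + 1)) := by
  refine (summable_mul_log_one_add_div_sub_logTaylor z 0).neg.congr fun n => ?_
  simp [logTaylor_succ, logTaylor_zero]

lemma one_add_div_natCast_add_one_ne_zero {z : ℂ} (hz : ∀ m : ℕ, z ≠ -m) (n : ℕ) :
    1 + z / ((n : ℂ) + 1) ≠ 0 := by
  have hN : (n : ℂ) + 1 ≠ 0 := by exact_mod_cast n.succ_ne_zero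
  intro h
  refine hz (n + 1) ?_
  field_simp at h
  push_cast
  linear_combination h

lemma prod_one_add_div_natCast_add_one (z : ℂ) (N : ℕ) :
    ∏ n ∈ range N, (1 + z / ((n : ℂ) + 1)) = (∏ n ∈ range N, (z + (n + 1))) / N ! := by
  induction N with
  | zero => simp
  | succ N ih =>
    rw [prod_range_succ, prod_range_succ, ih, Nat.factorial_succ]
    have : (N : ℂ) + 1 ≠ 0 := by exact_mod_cast N.succ_ne_zero
    push_cast
    field_simp
    ring

lemma GammaSeq_eq_exp {z : ℂ} (hz : ∀ m : ℕ, z ≠ -m) {N : ℕ} (hN : N ≠ 0) :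
    GammaSeq z N = exp (log N * z - log z - ∑ n ∈ range N, log (1 + z / ((n : ℂ) + 1))) := by
  have hz0 : z ≠ 0 := by simpa using hz 0
  have hprod : ∏ n ∈ range N, (z + ((n : ℂ) + 1)) ≠ 0 := prod_ne_zero_iff.mpr fun n _ h =>
    hz (n + 1) (by push_cast; linear_combination h)
  rw [exp_sub, exp_sub, exp_log hz0, exp_sum,
    prod_congr rfl fun n _ => exp_log (one_add_div_natCast_add_one_ne_zero hz n),
    prod_one_add_div_natCast_add_one, GammaSeq, prod_range_succ',
    cpow_def_of_ne_zero (by exact_mod_cast hN)]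
  push_cast
  field_simp
  rw [add_zero, mul_div_cancel_left₀ _ hz0]

lemma exp_logGammaWeierstrass {z : ℂ} (hz : ∀ m : ℕ, z ≠ -m) :
    exp (logGammaWeierstrass z) = Gamma z := by
  have hpartial : Tendsto (fun N => exp (-γ * z - log z +
      ∑ n ∈ range N, (z / ((n : ℂ) + 1) - log (1 + z / ((n : ℂ) + 1)))))
      atTop (𝓝 (exp (logGammaWeierstrass z))) :=
    (continuous_exp.tendsto _).comp
      (tendsto_const_nhds.add (summable_logGammaWeierstrass z).hasSum.tendsto_sum_nat)
  have hharmonic : Tendsto (fun N : ℕ => (harmonic N : ℂ) - log N - γ) atTop (𝓝 0) := by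
    have := ((continuous_ofReal.tendsto _).comp Real.tendsto_harmonic_sub_log).sub_const (γ : ℂ)
    simpa [Function.comp_def, natCast_log] using this
  have hGamma : Tendsto (fun N => exp (((harmonic N : ℂ) - log N - γ) * z) * GammaSeq z N)
      atTop (𝓝 (Gamma z)) := by
    simpa using ((continuous_exp.tendsto 0).comp (by simpa using hharmonic.mul_const z)).mul
      (GammaSeq_tendsto_Gamma z)
  refine tendsto_nhds_unique (hpartial.congr' ?_) hGamma
  filter_upwards [eventually_ne_atTop 0] with N hN
  rw [GammaSeq_eq_exp hz hN, ← exp_add, sum_sub_distrib]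
  congr 1
  push_cast [harmonic, div_eq_mul_inv]
  rw [← mul_sum]
  ring

lemma hasDerivAt_logGammaWeierstrass {z : ℂ} (hz : z.im ≠ 0) :
    HasDerivAt logGammaWeierstrass
      (-γ - z⁻¹ + ∑' n : ℕ, z / (((n : ℂ) + 1) * ((n : ℂ) + 1 + z))) z := by
  have hterm : ∀ (n : ℕ) (v : ℂ), v.im ≠ 0 →
      HasDerivAt (fun w => w / ((n : ℂ) + 1) - log (1 + w / ((n : ℂ) + 1)))
        (v / (((n : ℂ) + 1) * ((n : ℂ) + 1 + v))) v := fun n v hv => by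
    have hN : (n : ℂ) + 1 ≠ 0 := by exact_mod_cast n.succ_ne_zero
    have := natCast_add_one_add_ne_zero n hv
    refine ((hasDerivAt_id v).div_const _).sub (hasDerivAt_log_one_add_div n hv) |>.congr_deriv ?_
    field_simp
    ring
  have hseries := hasDerivAt_tsum_of_hasDerivAt_div_mul continuous_id hz hterm
    (summable_logGammaWeierstrass z)
  have hlog := hasDerivAt_log (mem_slitPlane_iff.mpr (Or.inr hz))
  exact (((hasDerivAt_id z).const_mul (-γ : ℂ)).sub hlog).add hseries |>.congr_deriv (by simp)

lemma digamma_eq_tsum {z : ℂ} (hz : z.im ≠ 0) :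
    digamma z = -γ - z⁻¹ + ∑' n : ℕ, z / (((n : ℂ) + 1) * ((n : ℂ) + 1 + z)) := by
  have hexp : ∀ w ∈ {w : ℂ | w.im ≠ 0}, exp (logGammaWeierstrass w) = Gamma w :=
    fun w hw => exp_logGammaWeierstrass fun m h => hw (by simp [h])
  have hdiff : DifferentiableOn ℂ logGammaWeierstrass {w : ℂ | w.im ≠ 0} :=
    fun w hw => (hasDerivAt_logGammaWeierstrass hw).differentiableAt.differentiableWithinAt
  rw [digamma_def, ← deriv_eqOn_logDeriv_of_exp_eqOn isOpen_setOf_im_ne_zero hdiff hexp hz,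
    (hasDerivAt_logGammaWeierstrass hz).deriv]

lemma summable_logBarnesG1p (z : ℂ) :
    Summable fun n : ℕ =>
      ((n : ℂ) + 1) * log (1 + z / ((n : ℂ) + 1)) + z ^ 2 / (2 * ((n : ℂ) + 1)) - z := by
  refine (summable_mul_log_one_add_div_sub_logTaylor z 1).congr fun n => ?_
  have hN : (n : ℂ) + 1 ≠ 0 := by exact_mod_cast n.succ_ne_zero
  simp [logTaylor_succ, logTaylor_zero]
  field_simp
  ring

lemma hasDerivAt_logBarnesG1p {z : ℂ} (hz : z.im ≠ 0) :
    HasDerivAt logBarnesG1p (Real.log (2 * π) / 2 + 1 / 2 - z + z * digamma z) z := by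
  have hterm : ∀ (n : ℕ) (v : ℂ), v.im ≠ 0 →
      HasDerivAt (fun w => ((n : ℂ) + 1) * log (1 + w / ((n : ℂ) + 1))
          + w ^ 2 / (2 * ((n : ℂ) + 1)) - w)
        (v ^ 2 / (((n : ℂ) + 1) * ((n : ℂ) + 1 + v))) v := fun n v hv => by
    have hN : (n : ℂ) + 1 ≠ 0 := by exact_mod_cast n.succ_ne_zero
    have := natCast_add_one_add_ne_zero n hv
    refine (((hasDerivAt_log_one_add_div n hv).const_mul _).add
      ((hasDerivAt_pow 2 v).div_const _)).sub (hasDerivAt_id v) |>.congr_deriv ?_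
    field_simp
    ring
  have hseries := hasDerivAt_tsum_of_hasDerivAt_div_mul (continuous_pow 2) hz hterm
    (summable_logBarnesG1p z)
  have hz0 : z ≠ 0 := fun h => hz (by simp [h])
  have htsum : ∑' n : ℕ, z ^ 2 / (((n : ℂ) + 1) * ((n : ℂ) + 1 + z))
      = z * (digamma z + γ + z⁻¹) := by
    simp_rw [pow_two, mul_div_assoc]
    rw [tsum_mul_left, digamma_eq_tsum hz]
    ring
  refine ((((hasDerivAt_id z).div_const 2).mul_const _).sub
    (((hasDerivAt_id z).add ((hasDerivAt_pow 2 z).mul_const _)).div_const 2)).add hseries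
    |>.congr_deriv ?_
  rw [htsum]
  field_simp
  ring

lemma logDeriv_barnesG_one_add {z : ℂ} (hz : z.im ≠ 0) :
    logDeriv (fun w => BarnesG (1 + w)) z
      = Real.log (2 * π) / 2 + 1 / 2 - z + z * digamma z := by
  have hdiff : DifferentiableOn ℂ logBarnesG1p {w : ℂ | w.im ≠ 0} :=
    fun w hw => (hasDerivAt_logBarnesG1p hw).differentiableAt.differentiableWithinAt
  rw [← deriv_eqOn_logDeriv_of_exp_eqOn isOpen_setOf_im_ne_zero hdiff
    (fun w _ => by rw [BarnesG, add_sub_cancel_left]) hz, (hasDerivAt_logBarnesG1p hz).deriv]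

/-- **Alexeiewsky's theorem** (antiderivative of `log Γ`):
for any `z` off the branch cut (i.e. on an open set where branches `logΓ` of `log ∘ Γ`
and `logG1p` of `log ∘ G(1 + ·)` exist and are analytic), the function
`z ↦ z(1-z)/2 + (z/2)·log(2π) + z·logΓ(z) − log G(1+z)` has derivative `logΓ(z)`. -/
theorem alexeiewsky (s : Set ℂ) (hs : IsOpen s) (logΓ logG1p : ℂ → ℂ)
    (hΓ : ∀ w ∈ s, Complex.exp (logΓ w) = Complex.Gamma w)
    (hG : ∀ w ∈ s, Complex.exp (logG1p w) = BarnesG (1 + w))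
    (hΓd : DifferentiableOn ℂ logΓ s) (hGd : DifferentiableOn ℂ logG1p s)
    (z : ℂ) (hz : z ∈ s) :
    HasDerivAt (fun w => w * (1 - w) / 2 + w / 2 * Real.log (2 * Real.pi)
        + w * logΓ w - logG1p w) (logΓ z) z := by
  have hdigamma : Set.EqOn (deriv logΓ) digamma s := deriv_eqOn_logDeriv_of_exp_eqOn hs hΓd hΓ
  have hderiv : Set.EqOn (deriv logG1p)
      (fun w => Real.log (2 * π) / 2 + 1 / 2 - w + w * deriv logΓ w) s := by
    refine eqOn_of_eqOn_inter_im_ne_zero hs (hGd.deriv hs).continuousOn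
      ((continuousOn_const.sub continuousOn_id).add
        (continuousOn_id.mul (hΓd.deriv hs).continuousOn)) fun w ⟨hw, him⟩ => ?_
    rw [deriv_eqOn_logDeriv_of_exp_eqOn hs hGd hG hw, logDeriv_barnesG_one_add him, hdigamma hw]
  have hΓz := (hΓd.differentiableAt (hs.mem_nhds hz)).hasDerivAt
  have hGz := (hGd.differentiableAt (hs.mem_nhds hz)).hasDerivAt
  rw [hderiv hz] at hGz
  refine ((((hasDerivAt_id z).mul ((hasDerivAt_id z).const_sub 1)).div_const 2).add
    (((hasDerivAt_id z).div_const 2).mul_const _)).add ((hasDerivAt_id z).mul hΓz) |>.sub hGz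
    |>.congr_deriv ?_
  simp only [id]
  ring
end

section
/- Let u(x,p,q) be smooth and satisfy u_{xx} + u_x/x + sin u = 0 for each (p,q). Define the 1-form ω = (−x u_x²/8 + (x/4)(cos u − 1)) dx − ((x²/4) u_p sin u + (x²/4) u_x u_{px} + (x/4) u_x u_p) dp − ((x²/4) u_q sin u + (x²/4) u_x u_{qx} + (x/4) u_x u_q) dq on (x,p,q)-space. Then dω = ((v_p u_q − v_q u_p)/4) dq ∧ dp, where v = x u_x. -/
/-- Partial derivative in the first variable. -/
noncomputable def pd1 (f : ℝ → ℝ → ℝ → ℝ) (x p q : ℝ) : ℝ := deriv (fun t => f t p q) x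

/-- Partial derivative in the second variable. -/
noncomputable def pd2 (f : ℝ → ℝ → ℝ → ℝ) (x p q : ℝ) : ℝ := deriv (fun t => f x t q) p

/-- Partial derivative in the third variable. -/
noncomputable def pd3 (f : ℝ → ℝ → ℝ → ℝ) (x p q : ℝ) : ℝ := deriv (fun t => f x p t) q

namespace DOmega

def F3 (g : ℝ → ℝ → ℝ → ℝ) : ℝ × ℝ × ℝ → ℝ := fun w => g w.1 w.2.1 w.2.2

def Sm (g : ℝ → ℝ → ℝ → ℝ) : Prop := ContDiff ℝ (⊤ : ℕ∞) (F3 g)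

def e1 : ℝ × ℝ × ℝ := (1, 0, 0)
def e2 : ℝ × ℝ × ℝ := (0, 1, 0)
def e3 : ℝ × ℝ × ℝ := (0, 0, 1)

lemma hasDerivAt_line1 (p q x : ℝ) : HasDerivAt (fun t : ℝ => (t, p, q)) e1 x :=
  (hasDerivAt_id x).prodMk ((hasDerivAt_const x p).prodMk (hasDerivAt_const x q))

lemma hasDerivAt_line2 (x q p : ℝ) : HasDerivAt (fun t : ℝ => (x, t, q)) e2 p :=
  (hasDerivAt_const p x).prodMk ((hasDerivAt_id p).prodMk (hasDerivAt_const p q))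

lemma hasDerivAt_line3 (x p q : ℝ) : HasDerivAt (fun t : ℝ => (x, p, t)) e3 q :=
  (hasDerivAt_const q x).prodMk ((hasDerivAt_const q p).prodMk (hasDerivAt_id q))

variable {g : ℝ → ℝ → ℝ → ℝ}

lemma Sm.diff (hg : Sm g) : Differentiable ℝ (F3 g) := hg.differentiable (by simp)

lemma pd1_eq (hg : Sm g) (x p q : ℝ) :
    pd1 g x p q = fderiv ℝ (F3 g) (x, p, q) e1 := by
  have h := ((hg.diff (x, p, q)).hasFDerivAt).comp_hasDerivAt x (hasDerivAt_line1 p q x)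
  exact h.deriv

lemma pd2_eq (hg : Sm g) (x p q : ℝ) :
    pd2 g x p q = fderiv ℝ (F3 g) (x, p, q) e2 := by
  have h := ((hg.diff (x, p, q)).hasFDerivAt).comp_hasDerivAt p (hasDerivAt_line2 x q p)
  exact h.deriv

lemma pd3_eq (hg : Sm g) (x p q : ℝ) :
    pd3 g x p q = fderiv ℝ (F3 g) (x, p, q) e3 := by
  have h := ((hg.diff (x, p, q)).hasFDerivAt).comp_hasDerivAt q (hasDerivAt_line3 x p q)
  exact h.deriv

lemma F3_pd (hg : Sm g) (e : ℝ × ℝ × ℝ) :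
    ContDiff ℝ (⊤ : ℕ∞) (fun w => fderiv ℝ (F3 g) w e) :=
  (hg.fderiv_right (by simp)).clm_apply contDiff_const

lemma Sm.pd1 (hg : Sm g) : Sm (_root_.pd1 g) := by
  have : F3 (_root_.pd1 g) = fun w => fderiv ℝ (F3 g) w e1 := by
    funext w; exact pd1_eq hg w.1 w.2.1 w.2.2
  rw [Sm, this]; exact F3_pd hg e1

lemma Sm.pd2 (hg : Sm g) : Sm (_root_.pd2 g) := by
  have : F3 (_root_.pd2 g) = fun w => fderiv ℝ (F3 g) w e2 := by
    funext w; exact pd2_eq hg w.1 w.2.1 w.2.2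
  rw [Sm, this]; exact F3_pd hg e2

lemma Sm.pd3 (hg : Sm g) : Sm (_root_.pd3 g) := by
  have : F3 (_root_.pd3 g) = fun w => fderiv ℝ (F3 g) w e3 := by
    funext w; exact pd3_eq hg w.1 w.2.1 w.2.2
  rw [Sm, this]; exact F3_pd hg e3

-- mixed partials as second fderiv
lemma pd_pd_eq (hg : Sm g) (e e' : ℝ × ℝ × ℝ) (w : ℝ × ℝ × ℝ) :
    fderiv ℝ (fun w => fderiv ℝ (F3 g) w e') w e
      = fderiv ℝ (fderiv ℝ (F3 g)) w e e' := by
  rw [fderiv_clm_apply ((hg.fderiv_right (m := 1) (WithTop.coe_le_coe.mpr le_top)).differentiable one_ne_zero w)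
    (differentiableAt_const e')]
  simp

lemma symm_snd (hg : Sm g) (e e' : ℝ × ℝ × ℝ) (w : ℝ × ℝ × ℝ) :
    fderiv ℝ (fderiv ℝ (F3 g)) w e e' = fderiv ℝ (fderiv ℝ (F3 g)) w e' e := by
  have := hg.contDiffAt (x := w)
  exact (this.isSymmSndFDerivAt (by simp; exact WithTop.coe_le_coe.mpr le_top)) e e'

end DOmega

namespace DOmega
variable {g : ℝ → ℝ → ℝ → ℝ}

lemma hd1 (hg : Sm g) (x p q : ℝ) : HasDerivAt (fun t => g t p q) (_root_.pd1 g x p q) x := by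
  rw [pd1_eq hg]
  exact ((hg.diff (x, p, q)).hasFDerivAt).comp_hasDerivAt x (hasDerivAt_line1 p q x)

lemma hd2 (hg : Sm g) (x p q : ℝ) : HasDerivAt (fun t => g x t q) (_root_.pd2 g x p q) p := by
  rw [pd2_eq hg]
  exact ((hg.diff (x, p, q)).hasFDerivAt).comp_hasDerivAt p (hasDerivAt_line2 x q p)

lemma hd3 (hg : Sm g) (x p q : ℝ) : HasDerivAt (fun t => g x p t) (_root_.pd3 g x p q) q := by
  rw [pd3_eq hg]
  exact ((hg.diff (x, p, q)).hasFDerivAt).comp_hasDerivAt q (hasDerivAt_line3 x p q)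

lemma pdF3_1 (hg : Sm g) : F3 (_root_.pd1 g) = fun w => fderiv ℝ (F3 g) w e1 :=
  funext fun w => pd1_eq hg w.1 w.2.1 w.2.2
lemma pdF3_2 (hg : Sm g) : F3 (_root_.pd2 g) = fun w => fderiv ℝ (F3 g) w e2 :=
  funext fun w => pd2_eq hg w.1 w.2.1 w.2.2
lemma pdF3_3 (hg : Sm g) : F3 (_root_.pd3 g) = fun w => fderiv ℝ (F3 g) w e3 :=
  funext fun w => pd3_eq hg w.1 w.2.1 w.2.2

lemma pd1_pd2 (hg : Sm g) (x p q : ℝ) :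
    _root_.pd1 (_root_.pd2 g) x p q = fderiv ℝ (fderiv ℝ (F3 g)) (x, p, q) e1 e2 := by
  rw [pd1_eq hg.pd2, pdF3_2 hg, pd_pd_eq hg]
lemma pd2_pd1 (hg : Sm g) (x p q : ℝ) :
    _root_.pd2 (_root_.pd1 g) x p q = fderiv ℝ (fderiv ℝ (F3 g)) (x, p, q) e2 e1 := by
  rw [pd2_eq hg.pd1, pdF3_1 hg, pd_pd_eq hg]
lemma pd1_pd3 (hg : Sm g) (x p q : ℝ) :
    _root_.pd1 (_root_.pd3 g) x p q = fderiv ℝ (fderiv ℝ (F3 g)) (x, p, q) e1 e3 := by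
  rw [pd1_eq hg.pd3, pdF3_3 hg, pd_pd_eq hg]
lemma pd3_pd1 (hg : Sm g) (x p q : ℝ) :
    _root_.pd3 (_root_.pd1 g) x p q = fderiv ℝ (fderiv ℝ (F3 g)) (x, p, q) e3 e1 := by
  rw [pd3_eq hg.pd1, pdF3_1 hg, pd_pd_eq hg]
lemma pd2_pd3 (hg : Sm g) (x p q : ℝ) :
    _root_.pd2 (_root_.pd3 g) x p q = fderiv ℝ (fderiv ℝ (F3 g)) (x, p, q) e2 e3 := by
  rw [pd2_eq hg.pd3, pdF3_3 hg, pd_pd_eq hg]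
lemma pd3_pd2 (hg : Sm g) (x p q : ℝ) :
    _root_.pd3 (_root_.pd2 g) x p q = fderiv ℝ (fderiv ℝ (F3 g)) (x, p, q) e3 e2 := by
  rw [pd3_eq hg.pd2, pdF3_2 hg, pd_pd_eq hg]

lemma comm12 (hg : Sm g) : _root_.pd1 (_root_.pd2 g) = _root_.pd2 (_root_.pd1 g) := by
  funext x p q; rw [pd1_pd2 hg, pd2_pd1 hg]; exact symm_snd hg e1 e2 (x, p, q)
lemma comm13 (hg : Sm g) : _root_.pd1 (_root_.pd3 g) = _root_.pd3 (_root_.pd1 g) := by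
  funext x p q; rw [pd1_pd3 hg, pd3_pd1 hg]; exact symm_snd hg e1 e3 (x, p, q)
lemma comm23 (hg : Sm g) : _root_.pd2 (_root_.pd3 g) = _root_.pd3 (_root_.pd2 g) := by
  funext x p q; rw [pd2_pd3 hg, pd3_pd2 hg]; exact symm_snd hg e2 e3 (x, p, q)

end DOmega


open DOmega in
/-- For a smooth family `u(x,p,q)` of solutions of `u_{xx} + u_x/x + sin u = 0`, the
localized Malgrange–Bertola 1-form
`ω = (−x u_x²/8 + (x/4)(cos u − 1)) dx − ((x²/4) u_p sin u + (x²/4) u_x u_{px} + (x/4) u_x u_p) dp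
   − ((x²/4) u_q sin u + (x²/4) u_x u_{qx} + (x/4) u_x u_q) dq`
satisfies `dω = ((v_p u_q − v_q u_p)/4) dq ∧ dp` with `v = x u_x`; componentwise:
the `dx∧dp` and `dx∧dq` components of `dω` vanish and its `dp∧dq` component equals
`−(v_p u_q − v_q u_p)/4`. -/
theorem dOmega_eq (u : ℝ → ℝ → ℝ → ℝ)
    (hu : ContDiff ℝ (⊤ : ℕ∞) (fun w : ℝ × ℝ × ℝ => u w.1 w.2.1 w.2.2))
    (hode : ∀ x p q : ℝ, 0 < x →
      pd1 (pd1 u) x p q + pd1 u x p q / x + Real.sin (u x p q) = 0)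
    (v ωx ωp ωq : ℝ → ℝ → ℝ → ℝ)
    (hv : v = fun a b c => a * pd1 u a b c)
    (hωx : ωx = fun a b c => -a * (pd1 u a b c) ^ 2 / 8 + a / 4 * (Real.cos (u a b c) - 1))
    (hωp : ωp = fun a b c => -(a ^ 2 / 4 * pd2 u a b c * Real.sin (u a b c)
      + a ^ 2 / 4 * pd1 u a b c * pd1 (pd2 u) a b c + a / 4 * pd1 u a b c * pd2 u a b c))
    (hωq : ωq = fun a b c => -(a ^ 2 / 4 * pd3 u a b c * Real.sin (u a b c)
      + a ^ 2 / 4 * pd1 u a b c * pd1 (pd3 u) a b c + a / 4 * pd1 u a b c * pd3 u a b c)) :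
    ∀ x p q : ℝ, 0 < x →
      pd1 ωp x p q - pd2 ωx x p q = 0 ∧
      pd1 ωq x p q - pd3 ωx x p q = 0 ∧
      pd2 ωq x p q - pd3 ωp x p q =
        -(pd2 v x p q * pd3 u x p q - pd3 v x p q * pd2 u x p q) / 4 := by
  subst hv hωx hωp hωq
  intro x p q hx
  have hx0 : x ≠ 0 := ne_of_gt hx
  have hsu : Sm u := hu
  -- derivative of ωp in x
  have Ewp : pd1 (fun a b c => -(a ^ 2 / 4 * pd2 u a b c * Real.sin (u a b c)
      + a ^ 2 / 4 * pd1 u a b c * pd1 (pd2 u) a b c + a / 4 * pd1 u a b c * pd2 u a b c)) x p q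
      = -(x / 2 * pd2 u x p q * Real.sin (u x p q)
        + x ^ 2 / 4 * pd1 (pd2 u) x p q * Real.sin (u x p q)
        + x ^ 2 / 4 * pd2 u x p q * (Real.cos (u x p q) * pd1 u x p q)
        + x / 2 * pd1 u x p q * pd1 (pd2 u) x p q
        + x ^ 2 / 4 * pd1 (pd1 u) x p q * pd1 (pd2 u) x p q
        + x ^ 2 / 4 * pd1 u x p q * pd1 (pd1 (pd2 u)) x p q
        + 1 / 4 * pd1 u x p q * pd2 u x p q
        + x / 4 * pd1 (pd1 u) x p q * pd2 u x p q
        + x / 4 * pd1 u x p q * pd1 (pd2 u) x p q) := by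
    have t1 := (((hasDerivAt_pow 2 x).div_const 4).mul (hd1 hsu.pd2 x p q)).mul
      ((hd1 hsu x p q).sin)
    have t2 := (((hasDerivAt_pow 2 x).div_const 4).mul (hd1 hsu.pd1 x p q)).mul
      (hd1 hsu.pd2.pd1 x p q)
    have t3 := (((hasDerivAt_id x).div_const 4).mul (hd1 hsu.pd1 x p q)).mul
      (hd1 hsu.pd2 x p q)
    refine (((t1.add t2).add t3).neg.deriv).trans ?_
    simp only [id_eq, Pi.mul_apply]
    push_cast
    ring
  -- derivative of ωx in p
  have Ewx2 : pd2 (fun a b c => -a * (pd1 u a b c) ^ 2 / 8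
      + a / 4 * (Real.cos (u a b c) - 1)) x p q
      = -(x / 4 * pd1 u x p q * pd2 (pd1 u) x p q
        + x / 4 * Real.sin (u x p q) * pd2 u x p q) := by
    have t1 := (((hd2 hsu.pd1 x p q).pow 2).const_mul (-x)).div_const 8
    have t2 := (((hd2 hsu x p q).cos).sub_const 1).const_mul (x / 4)
    refine ((t1.add t2).deriv).trans ?_
    push_cast
    ring
  rw [← comm12 hsu] at Ewx2
  -- p-derivative of the ODE
  have Ep0 : pd2 (pd1 (pd1 u)) x p q + pd2 (pd1 u) x p q / x
      + Real.cos (u x p q) * pd2 u x p q = 0 := by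
    have hfun : (fun s => pd1 (pd1 u) x s q + pd1 u x s q / x + Real.sin (u x s q))
        = fun _ : ℝ => (0 : ℝ) := funext fun s => hode x s q hx
    have h := ((hd2 hsu.pd1.pd1 x p q).add ((hd2 hsu.pd1 x p q).div_const x)).add
      ((hd2 hsu x p q).sin)
    have hz : deriv (fun s => pd1 (pd1 u) x s q + pd1 u x s q / x + Real.sin (u x s q)) p
        = 0 := by rw [hfun]; exact deriv_const p 0
    linear_combination h.deriv.symm.trans hz
  rw [← comm12 hsu.pd1, ← comm12 hsu] at Ep0
  -- ODE cleared of denominators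
  have E0' : x * pd1 (pd1 u) x p q + pd1 u x p q + x * Real.sin (u x p q) = 0 := by
    have hcan : pd1 u x p q / x * x = pd1 u x p q := div_mul_cancel₀ _ hx0
    linear_combination x * hode x p q hx - hcan
  have Ep' : x * pd1 (pd1 (pd2 u)) x p q + pd1 (pd2 u) x p q
      + x * (Real.cos (u x p q) * pd2 u x p q) = 0 := by
    have hcan : pd1 (pd2 u) x p q / x * x = pd1 (pd2 u) x p q := div_mul_cancel₀ _ hx0
    linear_combination x * Ep0 - hcan
  -- derivative of ωq in x
  have Ewq : pd1 (fun a b c => -(a ^ 2 / 4 * pd3 u a b c * Real.sin (u a b c)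
      + a ^ 2 / 4 * pd1 u a b c * pd1 (pd3 u) a b c + a / 4 * pd1 u a b c * pd3 u a b c)) x p q
      = -(x / 2 * pd3 u x p q * Real.sin (u x p q)
        + x ^ 2 / 4 * pd1 (pd3 u) x p q * Real.sin (u x p q)
        + x ^ 2 / 4 * pd3 u x p q * (Real.cos (u x p q) * pd1 u x p q)
        + x / 2 * pd1 u x p q * pd1 (pd3 u) x p q
        + x ^ 2 / 4 * pd1 (pd1 u) x p q * pd1 (pd3 u) x p q
        + x ^ 2 / 4 * pd1 u x p q * pd1 (pd1 (pd3 u)) x p q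
        + 1 / 4 * pd1 u x p q * pd3 u x p q
        + x / 4 * pd1 (pd1 u) x p q * pd3 u x p q
        + x / 4 * pd1 u x p q * pd1 (pd3 u) x p q) := by
    have t1 := (((hasDerivAt_pow 2 x).div_const 4).mul (hd1 hsu.pd3 x p q)).mul
      ((hd1 hsu x p q).sin)
    have t2 := (((hasDerivAt_pow 2 x).div_const 4).mul (hd1 hsu.pd1 x p q)).mul
      (hd1 hsu.pd3.pd1 x p q)
    have t3 := (((hasDerivAt_id x).div_const 4).mul (hd1 hsu.pd1 x p q)).mul
      (hd1 hsu.pd3 x p q)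
    refine (((t1.add t2).add t3).neg.deriv).trans ?_
    simp only [id_eq, Pi.mul_apply]
    push_cast
    ring
  have Ewx3 : pd3 (fun a b c => -a * (pd1 u a b c) ^ 2 / 8
      + a / 4 * (Real.cos (u a b c) - 1)) x p q
      = -(x / 4 * pd1 u x p q * pd3 (pd1 u) x p q
        + x / 4 * Real.sin (u x p q) * pd3 u x p q) := by
    have t1 := (((hd3 hsu.pd1 x p q).pow 2).const_mul (-x)).div_const 8
    have t2 := (((hd3 hsu x p q).cos).sub_const 1).const_mul (x / 4)
    refine ((t1.add t2).deriv).trans ?_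
    push_cast
    ring
  rw [← comm13 hsu] at Ewx3
  -- q-derivative of the ODE
  have Eq0 : pd3 (pd1 (pd1 u)) x p q + pd3 (pd1 u) x p q / x
      + Real.cos (u x p q) * pd3 u x p q = 0 := by
    have hfun : (fun s => pd1 (pd1 u) x p s + pd1 u x p s / x + Real.sin (u x p s))
        = fun _ : ℝ => (0 : ℝ) := funext fun s => hode x p s hx
    have h := ((hd3 hsu.pd1.pd1 x p q).add ((hd3 hsu.pd1 x p q).div_const x)).add
      ((hd3 hsu x p q).sin)
    have hz : deriv (fun s => pd1 (pd1 u) x p s + pd1 u x p s / x + Real.sin (u x p s)) q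
        = 0 := by rw [hfun]; exact deriv_const q 0
    linear_combination h.deriv.symm.trans hz
  rw [← comm13 hsu.pd1, ← comm13 hsu] at Eq0
  have Eq' : x * pd1 (pd1 (pd3 u)) x p q + pd1 (pd3 u) x p q
      + x * (Real.cos (u x p q) * pd3 u x p q) = 0 := by
    have hcan : pd1 (pd3 u) x p q / x * x = pd1 (pd3 u) x p q := div_mul_cancel₀ _ hx0
    linear_combination x * Eq0 - hcan
  -- derivative of ωq in p
  have Ewq2 : pd2 (fun a b c => -(a ^ 2 / 4 * pd3 u a b c * Real.sin (u a b c)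
      + a ^ 2 / 4 * pd1 u a b c * pd1 (pd3 u) a b c + a / 4 * pd1 u a b c * pd3 u a b c)) x p q
      = -(x ^ 2 / 4 * pd2 (pd3 u) x p q * Real.sin (u x p q)
        + x ^ 2 / 4 * pd3 u x p q * (Real.cos (u x p q) * pd2 u x p q)
        + x ^ 2 / 4 * pd2 (pd1 u) x p q * pd1 (pd3 u) x p q
        + x ^ 2 / 4 * pd1 u x p q * pd2 (pd1 (pd3 u)) x p q
        + x / 4 * pd2 (pd1 u) x p q * pd3 u x p q
        + x / 4 * pd1 u x p q * pd2 (pd3 u) x p q) := by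
    have t1 := ((hd2 hsu.pd3 x p q).const_mul (x ^ 2 / 4)).mul ((hd2 hsu x p q).sin)
    have t2 := ((hd2 hsu.pd1 x p q).const_mul (x ^ 2 / 4)).mul (hd2 hsu.pd3.pd1 x p q)
    have t3 := ((hd2 hsu.pd1 x p q).const_mul (x / 4)).mul (hd2 hsu.pd3 x p q)
    refine (((t1.add t2).add t3).neg.deriv).trans ?_
    ring
  rw [← comm12 hsu.pd3, ← comm12 hsu] at Ewq2
  -- derivative of ωp in q
  have Ewp3 : pd3 (fun a b c => -(a ^ 2 / 4 * pd2 u a b c * Real.sin (u a b c)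
      + a ^ 2 / 4 * pd1 u a b c * pd1 (pd2 u) a b c + a / 4 * pd1 u a b c * pd2 u a b c)) x p q
      = -(x ^ 2 / 4 * pd3 (pd2 u) x p q * Real.sin (u x p q)
        + x ^ 2 / 4 * pd2 u x p q * (Real.cos (u x p q) * pd3 u x p q)
        + x ^ 2 / 4 * pd3 (pd1 u) x p q * pd1 (pd2 u) x p q
        + x ^ 2 / 4 * pd1 u x p q * pd3 (pd1 (pd2 u)) x p q
        + x / 4 * pd3 (pd1 u) x p q * pd2 u x p q
        + x / 4 * pd1 u x p q * pd3 (pd2 u) x p q) := by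
    have t1 := ((hd3 hsu.pd2 x p q).const_mul (x ^ 2 / 4)).mul ((hd3 hsu x p q).sin)
    have t2 := ((hd3 hsu.pd1 x p q).const_mul (x ^ 2 / 4)).mul (hd3 hsu.pd2.pd1 x p q)
    have t3 := ((hd3 hsu.pd1 x p q).const_mul (x / 4)).mul (hd3 hsu.pd2 x p q)
    refine (((t1.add t2).add t3).neg.deriv).trans ?_
    ring
  rw [← comm13 hsu.pd2, ← comm23 hsu, ← comm13 hsu] at Ewp3
  -- derivatives of v
  have hv2 : pd2 (fun a b c => a * pd1 u a b c) x p q = x * pd2 (pd1 u) x p q :=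
    ((hd2 hsu.pd1 x p q).const_mul x).deriv
  have hv3 : pd3 (fun a b c => a * pd1 u a b c) x p q = x * pd3 (pd1 u) x p q :=
    ((hd3 hsu.pd1 x p q).const_mul x).deriv
  rw [← comm12 hsu] at hv2
  rw [← comm13 hsu] at hv3
  refine ⟨?_, ?_, ?_⟩
  · rw [Ewp, Ewx2]
    linear_combination (-(x / 4 * pd1 (pd2 u) x p q + pd2 u x p q / 4)) * E0'
      + (-(x / 4 * pd1 u x p q)) * Ep'
  · rw [Ewq, Ewx3]
    linear_combination (-(x / 4 * pd1 (pd3 u) x p q + pd3 u x p q / 4)) * E0'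
      + (-(x / 4 * pd1 u x p q)) * Eq'
  · rw [Ewq2, Ewp3, hv2, hv3]
    ring
end

section
/- Let u(x,p,q) be smooth and satisfy u_{xx} + u_x/x + sin u = 0 for each (p,q); set v = x u_x and H = v²/(2x) − x cos u. Then the 1-form ω = (−x u_x²/8 + (x/4)(cos u−1)) dx − ((x²/4) u_p sin u + (x²/4) u_x u_{px} + (x/4) u_x u_p) dp − ((x²/4) u_q sin u + (x²/4) u_x u_{qx} + (x/4) u_x u_q) dq satisfies ω = −(1/4) d(x²/2 + x H) + (1/4)(H dx − v du), where du = u_x dx + u_p dp + u_q dq and d denotes the total differential in (x,p,q). -/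
/-- For a smooth family `u(x,p,q)` of solutions of `u_{xx} + u_x/x + sin u = 0`, with
`v = x u_x` and `H = v²/(2x) − x cos u`, the localized Malgrange–Bertola form satisfies
`ω = −(1/4) d(x²/2 + x H) + (1/4)(H dx − v du)` where `du = u_x dx + u_p dp + u_q dq`
and `d` is the total differential in `(x,p,q)`; componentwise:
`ω_x = −(1/4)∂_x(x²/2 + xH) + (1/4)(H − v u_x)`, `ω_p = −(1/4)∂_p(xH) − (1/4) v u_p`,
`ω_q = −(1/4)∂_q(xH) − (1/4) v u_q`. -/
theorem omega_action_form (u : ℝ → ℝ → ℝ → ℝ)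
    (hu : ContDiff ℝ (⊤ : ℕ∞) (fun w : ℝ × ℝ × ℝ => u w.1 w.2.1 w.2.2))
    (hode : ∀ x p q : ℝ, 0 < x →
      pd1 (pd1 u) x p q + pd1 u x p q / x + Real.sin (u x p q) = 0)
    (v H F ωx ωp ωq : ℝ → ℝ → ℝ → ℝ)
    (hv : v = fun a b c => a * pd1 u a b c)
    (hH : H = fun a b c => (v a b c) ^ 2 / (2 * a) - a * Real.cos (u a b c))
    (hF : F = fun a b c => a ^ 2 / 2 + a * H a b c)
    (hωx : ωx = fun a b c => -a * (pd1 u a b c) ^ 2 / 8 + a / 4 * (Real.cos (u a b c) - 1))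
    (hωp : ωp = fun a b c => -(a ^ 2 / 4 * pd2 u a b c * Real.sin (u a b c)
      + a ^ 2 / 4 * pd1 u a b c * pd1 (pd2 u) a b c + a / 4 * pd1 u a b c * pd2 u a b c))
    (hωq : ωq = fun a b c => -(a ^ 2 / 4 * pd3 u a b c * Real.sin (u a b c)
      + a ^ 2 / 4 * pd1 u a b c * pd1 (pd3 u) a b c + a / 4 * pd1 u a b c * pd3 u a b c)) :
    ∀ x p q : ℝ, 0 < x →
      ωx x p q = -(1 / 4) * pd1 F x p q + (1 / 4) * (H x p q - v x p q * pd1 u x p q) ∧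
      ωp x p q = -(1 / 4) * pd2 F x p q - (1 / 4) * (v x p q * pd2 u x p q) ∧
      ωq x p q = -(1 / 4) * pd3 F x p q - (1 / 4) * (v x p q * pd3 u x p q) := by
  intro x p q hx
  have hxne : x ≠ 0 := ne_of_gt hx
  set U : ℝ × ℝ × ℝ → ℝ := fun w => u w.1 w.2.1 w.2.2 with hUdef
  have hUd : Differentiable ℝ U := hu.differentiable (by simp)
  have hDU : Differentiable ℝ (fderiv ℝ U) := (hu.fderiv_right (m := 1) (by exact WithTop.coe_le_coe.mpr le_top)).differentiable one_ne_zero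
  -- coordinate lines
  have hL1 : ∀ b c t : ℝ, HasDerivAt (fun s : ℝ => (s, b, c) : ℝ → ℝ × ℝ × ℝ)
      ((1:ℝ), (0:ℝ), (0:ℝ)) t :=
    fun b c t => HasDerivAt.prodMk (hasDerivAt_id t) (HasDerivAt.prodMk (hasDerivAt_const t b) (hasDerivAt_const t c))
  have hL2 : ∀ a c t : ℝ, HasDerivAt (fun s : ℝ => (a, s, c) : ℝ → ℝ × ℝ × ℝ)
      ((0:ℝ), (1:ℝ), (0:ℝ)) t :=
    fun a c t => HasDerivAt.prodMk (hasDerivAt_const t a) (HasDerivAt.prodMk (hasDerivAt_id t) (hasDerivAt_const t c))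
  have hL3 : ∀ a b t : ℝ, HasDerivAt (fun s : ℝ => (a, b, s) : ℝ → ℝ × ℝ × ℝ)
      ((0:ℝ), (0:ℝ), (1:ℝ)) t :=
    fun a b t => HasDerivAt.prodMk (hasDerivAt_const t a) (HasDerivAt.prodMk (hasDerivAt_const t b) (hasDerivAt_id t))
  -- derivative of U along a line
  have keyU : ∀ {L : ℝ → ℝ × ℝ × ℝ} {d : ℝ × ℝ × ℝ} {t : ℝ}, HasDerivAt L d t →
      HasDerivAt (fun s => U (L s)) (fderiv ℝ U (L t) d) t :=
    fun {L d t} hL => (hUd (L t)).hasFDerivAt.comp_hasDerivAt t hL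
  -- derivative of a directional derivative of U along a line
  have keyG : ∀ (e : ℝ × ℝ × ℝ) {L : ℝ → ℝ × ℝ × ℝ} {d : ℝ × ℝ × ℝ} {t : ℝ}, HasDerivAt L d t →
      HasDerivAt (fun s => fderiv ℝ U (L s) e) (fderiv ℝ (fderiv ℝ U) (L t) d e) t := by
    intro e L d t hL
    have h1 : HasFDerivAt (fun w => fderiv ℝ U w e)
        ((ContinuousLinearMap.apply ℝ ℝ e).comp (fderiv ℝ (fderiv ℝ U) (L t))) (L t) :=
      (ContinuousLinearMap.apply ℝ ℝ e).hasFDerivAt.comp (L t) (hDU (L t)).hasFDerivAt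
    exact h1.comp_hasDerivAt t hL
  -- first partials as directional derivatives
  have p1 : ∀ a b c : ℝ, pd1 u a b c = fderiv ℝ U (a, b, c) (1, 0, 0) :=
    fun a b c => (keyU (hL1 b c a)).deriv
  have p2 : ∀ a b c : ℝ, pd2 u a b c = fderiv ℝ U (a, b, c) (0, 1, 0) :=
    fun a b c => (keyU (hL2 a c b)).deriv
  have p3 : ∀ a b c : ℝ, pd3 u a b c = fderiv ℝ U (a, b, c) (0, 0, 1) :=
    fun a b c => (keyU (hL3 a b c)).deriv
  -- symmetry of the second derivative
  have hsymm : ∀ (y : ℝ × ℝ × ℝ) (v₁ v₂ : ℝ × ℝ × ℝ),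
      fderiv ℝ (fderiv ℝ U) y v₁ v₂ = fderiv ℝ (fderiv ℝ U) y v₂ v₁ :=
    fun y v₁ v₂ => second_derivative_symmetric (fun z => (hUd z).hasFDerivAt)
      ((hDU y).hasFDerivAt) v₁ v₂
  -- abbreviations
  set u0 := u x p q with hu0
  set ax := fderiv ℝ U (x, p, q) ((1:ℝ), (0:ℝ), (0:ℝ)) with hax
  set ap' := fderiv ℝ U (x, p, q) ((0:ℝ), (1:ℝ), (0:ℝ)) with hap
  set aq := fderiv ℝ U (x, p, q) ((0:ℝ), (0:ℝ), (1:ℝ)) with haq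
  set bxx := fderiv ℝ (fderiv ℝ U) (x, p, q) ((1:ℝ), (0:ℝ), (0:ℝ)) ((1:ℝ), (0:ℝ), (0:ℝ)) with hbxx
  set bxp := fderiv ℝ (fderiv ℝ U) (x, p, q) ((1:ℝ), (0:ℝ), (0:ℝ)) ((0:ℝ), (1:ℝ), (0:ℝ)) with hbxp
  set bxq := fderiv ℝ (fderiv ℝ U) (x, p, q) ((1:ℝ), (0:ℝ), (0:ℝ)) ((0:ℝ), (0:ℝ), (1:ℝ)) with hbxq
  -- second partials
  have p11 : pd1 (pd1 u) x p q = bxx := by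
    show deriv (fun t => pd1 u t p q) x = bxx
    have hfun : (fun t => pd1 u t p q) = fun t => fderiv ℝ U (t, p, q) ((1:ℝ), (0:ℝ), (0:ℝ)) :=
      funext fun t => p1 t p q
    rw [hfun]
    exact (keyG (1, 0, 0) (hL1 p q x)).deriv
  have p12 : pd1 (pd2 u) x p q = bxp := by
    show deriv (fun t => pd2 u t p q) x = bxp
    have hfun : (fun t => pd2 u t p q) = fun t => fderiv ℝ U (t, p, q) ((0:ℝ), (1:ℝ), (0:ℝ)) :=
      funext fun t => p2 t p q
    rw [hfun]
    exact (keyG (0, 1, 0) (hL1 p q x)).deriv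
  have p13 : pd1 (pd3 u) x p q = bxq := by
    show deriv (fun t => pd3 u t p q) x = bxq
    have hfun : (fun t => pd3 u t p q) = fun t => fderiv ℝ U (t, p, q) ((0:ℝ), (0:ℝ), (1:ℝ)) :=
      funext fun t => p3 t p q
    rw [hfun]
    exact (keyG (0, 0, 1) (hL1 p q x)).deriv
  -- derivatives of u and pd1 u along the coordinate lines through (x,p,q)
  have hu1 : HasDerivAt (fun t => u t p q) ax x := keyU (hL1 p q x)
  have hu2 : HasDerivAt (fun t => u x t q) ap' p := keyU (hL2 x q p)
  have hu3 : HasDerivAt (fun t => u x p t) aq q := keyU (hL3 x p q)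
  have hg1 : HasDerivAt (fun t => pd1 u t p q) bxx x :=
    (keyG (1, 0, 0) (hL1 p q x)).congr_of_eventuallyEq
      (Filter.Eventually.of_forall fun t => p1 t p q)
  have hg2 : HasDerivAt (fun t => pd1 u x t q) bxp p := by
    have h := (keyG (1, 0, 0) (hL2 x q p)).congr_of_eventuallyEq
      (Filter.Eventually.of_forall fun t => p1 x t q)
    rwa [hsymm (x, p, q) ((0:ℝ), (1:ℝ), (0:ℝ)) ((1:ℝ), (0:ℝ), (0:ℝ))] at h
  have hg3 : HasDerivAt (fun t => pd1 u x p t) bxq q := by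
    have h := (keyG (1, 0, 0) (hL3 x p q)).congr_of_eventuallyEq
      (Filter.Eventually.of_forall fun t => p1 x p t)
    rwa [hsymm (x, p, q) ((0:ℝ), (0:ℝ), (1:ℝ)) ((1:ℝ), (0:ℝ), (0:ℝ))] at h
  have hFfun : ∀ a b c : ℝ, F a b c
      = a ^ 2 / 2 + a * ((a * pd1 u a b c) ^ 2 / (2 * a) - a * Real.cos (u a b c)) := by
    intro a b c; rw [hF, hH, hv]
  -- the ODE at (x,p,q)
  have hode' : bxx = -(ax / x) - Real.sin u0 := by
    have h := hode x p q hx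
    rw [p11, p1 x p q] at h
    linarith
  -- ∂ₓF
  have hFx : pd1 F x p q = x + (2 * x * ax ^ 2 + x ^ 2 * (2 * ax ^ 1 * bxx)) / 2
      - (2 * x * Real.cos u0 + x ^ 2 * (-Real.sin u0 * ax)) := by
    have A1 : HasDerivAt (fun t : ℝ => t ^ 2) (2 * x) x := by
      simpa using hasDerivAt_pow 2 x
    have hφ : HasDerivAt
        (fun t : ℝ => t ^ 2 / 2 + t ^ 2 * (pd1 u t p q) ^ 2 / 2 - t ^ 2 * Real.cos (u t p q))
        (2 * x / 2 + (2 * x * (pd1 u x p q) ^ 2 + x ^ 2 * (2 * pd1 u x p q ^ 1 * bxx)) / 2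
          - (2 * x * Real.cos (u x p q) + x ^ 2 * (-Real.sin (u x p q) * ax))) x :=
      ((A1.div_const 2).add ((A1.mul (hg1.pow 2)).div_const 2)).sub (A1.mul hu1.cos)
    have hev : (fun t => F t p q) =ᶠ[nhds x] fun t : ℝ =>
        t ^ 2 / 2 + t ^ 2 * (pd1 u t p q) ^ 2 / 2 - t ^ 2 * Real.cos (u t p q) := by
      filter_upwards [eventually_gt_nhds hx] with t ht
      have htne : t ≠ 0 := ne_of_gt ht
      rw [hFfun t p q]
      field_simp
      ring
    have : pd1 F x p q = deriv (fun t : ℝ =>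
        t ^ 2 / 2 + t ^ 2 * (pd1 u t p q) ^ 2 / 2 - t ^ 2 * Real.cos (u t p q)) x :=
      hev.deriv_eq
    rw [this, hφ.deriv, p1 x p q, ← hax, ← hu0]
    ring
  -- ∂ₚF
  have hFp : pd2 F x p q = x * (2 * (x * pd1 u x p q) ^ 1 * (x * bxp) / (2 * x)
      - x * (-Real.sin u0 * ap')) := by
    have hφ : HasDerivAt (fun t : ℝ =>
        x ^ 2 / 2 + x * ((x * pd1 u x t q) ^ 2 / (2 * x) - x * Real.cos (u x t q)))
        (x * (2 * (x * pd1 u x p q) ^ 1 * (x * bxp) / (2 * x) - x * (-Real.sin (u x p q) * ap'))) p :=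
      (((((hg2.const_mul x).pow 2).div_const (2 * x)).sub (hu2.cos.const_mul x)).const_mul x).const_add
        (x ^ 2 / 2)
    show deriv (fun t => F x t q) p = _
    rw [funext fun t => hFfun x t q]
    exact hφ.deriv
  -- ∂_qF
  have hFq : pd3 F x p q = x * (2 * (x * pd1 u x p q) ^ 1 * (x * bxq) / (2 * x)
      - x * (-Real.sin u0 * aq)) := by
    have hφ : HasDerivAt (fun t : ℝ =>
        x ^ 2 / 2 + x * ((x * pd1 u x p t) ^ 2 / (2 * x) - x * Real.cos (u x p t)))
        (x * (2 * (x * pd1 u x p q) ^ 1 * (x * bxq) / (2 * x) - x * (-Real.sin (u x p q) * aq))) q :=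
      (((((hg3.const_mul x).pow 2).div_const (2 * x)).sub (hu3.cos.const_mul x)).const_mul x).const_add
        (x ^ 2 / 2)
    show deriv (fun t => F x p t) q = _
    rw [funext fun t => hFfun x p t]
    exact hφ.deriv
  refine ⟨?_, ?_, ?_⟩
  · simp only [hωx, hv, hH]
    rw [hFx, p1 x p q, ← hax, hode']
    field_simp
    ring
  · simp only [hωp, hv]
    rw [hFp, p12, p2 x p q, p1 x p q, ← hax, ← hap]
    field_simp
    ring
  · simp only [hωq, hv]
    rw [hFq, p13, p3 x p q, p1 x p q, ← hax, ← haq]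
    field_simp
    ring
end
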